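/- Let A be a real symmetric n×n matrix with trace 0 and let P be a real density matrix that is controllable, i.e. the unital complex subalgebra generated by A and P is the full algebra of n×n complex matrices. If for some time t the matrix U(t)·P·U(−t) has all entries real, then there is a complex number ζ with ζ^n = 1 such that U(2t) = ζ·I. -/

import Mathlib

/-!
Since `A` is real, entrywise complex conjugation maps `U(t)` to `U(-t)`; as `P` is real too,
reality of `U(t) P U(-t)` says `U(-t) P U(t) = U(t) P U(-t)`, i.e. `U(2t)` commutes with `P`.
It also commutes with `A`, hence with the algebra generated by `A` and `P`, which is everything,
so `U(2t) = ζ • 1`. Finally `ζ ^ n = det U(2t) = exp(2it · tr A) = 1`, computing the determinant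
in an eigenbasis of the Hermitian matrix `A`.
-/

open Matrix
open scoped ComplexOrder

/-- The transition matrix `U(t) = exp(itA)`. -/
noncomputable def U {n : ℕ} (A : Matrix (Fin n) (Fin n) ℂ) (t : ℝ) :
    Matrix (Fin n) (Fin n) ℂ :=
  NormedSpace.exp (((t : ℂ) * Complex.I) • A)

namespace Matrix

theorem map_conj_eq_self {m : Type*} {M : Matrix m m ℂ} (hM : ∀ i j, (M i j).im = 0) :
    M.map (starRingEnd ℂ) = M := by
  ext i j
  exact Complex.conj_eq_iff_im.2 (hM i j)

theorem isHermitian_of_im_eq_zero {m : Type*} {M : Matrix m m ℂ} (hM : ∀ i j, (M i j).im = 0)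
    (hsymm : Mᵀ = M) : M.IsHermitian := by
  ext i j
  simpa [Complex.conj_eq_iff_im.2 (hM j i)] using congrFun (congrFun hsymm i) j

variable {m : Type*} [Fintype m] [DecidableEq m]

theorem mem_range_scalar_of_adjoin_eq_top {R : Type*} [CommSemiring R] {s : Set (Matrix m m R)}
    (hs : Algebra.adjoin R s = ⊤) {M : Matrix m m R} (hM : ∀ X ∈ s, Commute M X) :
    M ∈ Set.range (scalar m) := by
  rw [← center_eq_range, Semigroup.mem_center_iff]
  intro X
  exact (Algebra.commute_of_mem_adjoin_of_forall_mem_commute (hs ▸ Algebra.mem_top) hM).symm.eq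

theorem IsHermitian.det_exp_smul {A : Matrix m m ℂ} (hA : A.IsHermitian) (c : ℂ) :
    (NormedSpace.exp (c • A)).det = Complex.exp (c * A.trace) := by
  set W : Matrix m m ℂ := (hA.eigenvectorUnitary : Matrix m m ℂ)
  have hW : IsUnit W := (Unitary.toUnits hA.eigenvectorUnitary).isUnit
  have hconj : c • A = W * diagonal (fun i => c * hA.eigenvalues i) * W⁻¹ := by
    conv_lhs => rw [hA.spectral_theorem]
    rw [Unitary.conjStarAlgAut_apply,
      inv_eq_left_inv (Unitary.star_mul_self_of_mem hA.eigenvectorUnitary.2), ← smul_mul_assoc,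
      ← mul_smul_comm, ← diagonal_smul]
    rfl
  rw [hconj, Matrix.exp_conj W _ hW, det_conj hW, exp_diagonal, det_diagonal,
    hA.trace_eq_sum_eigenvalues]
  simp only [Pi.coe_exp, ← Complex.exp_eq_exp_ℂ, ← Complex.exp_sum, Finset.mul_sum]
  rfl

end Matrix

section Transition

variable {n : ℕ} (A : Matrix (Fin n) (Fin n) ℂ)

theorem U_add (s t : ℝ) : U A s * U A t = U A (s + t) := by
  rw [U, U, U, ← Matrix.exp_add_of_commute _ _ (((Commute.refl A).smul_left _).smul_right _),
    ← add_smul]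
  push_cast
  ring_nf

theorem U_zero : U A 0 = 1 := by
  simp [U]

theorem commute_U_self (t : ℝ) : Commute (U A t) A :=
  ((Commute.refl A).smul_left _).exp_left

variable {A}

theorem map_conj_U (hA : ∀ i j, (A i j).im = 0) (t : ℝ) :
    (U A t).map (starRingEnd ℂ) = U A (-t) := by
  have hmap : ∀ M : Matrix (Fin n) (Fin n) ℂ, M.map (starRingEnd ℂ) = Mᴴᵀ := fun M => by
    rw [conjTranspose, transpose_map, transpose_transpose]; rfl
  rw [U, U, hmap, ← exp_conjTranspose, ← exp_transpose, ← hmap,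
    Matrix.map_smul' _ _ _ (map_mul _), map_conj_eq_self hA]
  simp

theorem commute_U_two_mul {P : Matrix (Fin n) (Fin n) ℂ} {t : ℝ}
    (h : U A (-t) * P * U A t = U A t * P * U A (-t)) : Commute (U A (2 * t)) P := by
  have hU2 : U A (2 * t) = U A t * U A t := by rw [U_add, two_mul]
  have hinv : U A (-t) * U A t = 1 := by rw [U_add, neg_add_cancel, U_zero]
  have hinv' : U A t * U A (-t) = 1 := by rw [U_add, add_neg_cancel, U_zero]
  calc U A (2 * t) * P
      = U A t * (U A t * P * U A (-t)) * U A t := by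
        rw [hU2]; simp only [mul_assoc, hinv, mul_one]
    _ = U A t * (U A (-t) * P * U A t) * U A t := by rw [h]
    _ = P * U A (2 * t) := by
        rw [hU2]; simp only [← mul_assoc, hinv', one_mul]

end Transition

theorem stmt_8_general {n : ℕ}
    (A : Matrix (Fin n) (Fin n) ℂ)
    (hAreal : ∀ i j, (A i j).im = 0) (hAsym : Aᵀ = A)
    (hAtr : A.trace = 0)
    (P : Matrix (Fin n) (Fin n) ℂ)
    (hPreal : ∀ i j, (P i j).im = 0)
    (hctrl : Algebra.adjoin ℂ ({A, P} : Set (Matrix (Fin n) (Fin n) ℂ)) = ⊤)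
    (t : ℝ)
    (hreal : ∀ i j, ((U A t * P * U A (-t)) i j).im = 0) :
    ∃ ζ : ℂ, ζ ^ n = 1 ∧ U A (2 * t) = ζ • (1 : Matrix (Fin n) (Fin n) ℂ) := by
  have hsymm : U A (-t) * P * U A t = U A t * P * U A (-t) := by
    simpa [Matrix.map_mul, map_conj_U hAreal, map_conj_eq_self hPreal] using
      map_conj_eq_self hreal
  obtain ⟨ζ, hζ⟩ := mem_range_scalar_of_adjoin_eq_top hctrl (M := U A (2 * t)) <| by
    rintro X (rfl | rfl)
    exacts [commute_U_self _ _, commute_U_two_mul hsymm]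
  have hU : U A (2 * t) = ζ • 1 := by rw [← hζ, scalar_apply, smul_one_eq_diagonal]
  refine ⟨ζ, ?_, hU⟩
  have hdet :=
    (isHermitian_of_im_eq_zero hAreal hAsym).det_exp_smul (((2 * t : ℝ) : ℂ) * Complex.I)
  rwa [← U, hU, hAtr, mul_zero, Complex.exp_zero, det_smul, det_one, mul_one,
    Fintype.card_fin] at hdet

/-- If `A` is real symmetric with trace `0`, `P` is a real,
controllable density matrix, and `U(t)·P·U(−t)` is real for some `t`, then
`U(2t) = ζ·I` for some `n`-th root of unity `ζ`. -/
theorem stmt_8 {n : ℕ} (hn : 1 ≤ n)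
    (A : Matrix (Fin n) (Fin n) ℂ)
    (hAreal : ∀ i j, (A i j).im = 0) (hAsym : Aᵀ = A)
    (hAtr : A.trace = 0)
    (P : Matrix (Fin n) (Fin n) ℂ)
    (hP : P.PosSemidef) (hPtr : P.trace = 1)
    (hPreal : ∀ i j, (P i j).im = 0)
    (hctrl : Algebra.adjoin ℂ ({A, P} : Set (Matrix (Fin n) (Fin n) ℂ)) = ⊤)
    (t : ℝ)
    (hreal : ∀ i j, ((U A t * P * U A (-t)) i j).im = 0) :
    ∃ ζ : ℂ, ζ ^ n = 1 ∧ U A (2 * t) = ζ • (1 : Matrix (Fin n) (Fin n) ℂ) :=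
  stmt_8_general A hAreal hAsym hAtr P hPreal hctrl t hreal
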